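/- Assume A(iω) is invertible for every ω ∈ ℝ, and let ω̂ ∈ ℝ with ξ̂ := ‖G(iω̂)‖, where ‖·‖ denotes the operator norm from ℂ^{n_u} to ℂ^{n_y} with Euclidean norms (the largest singular value). Then for every real ξ with ‖D‖ < ξ ≤ ξ̂, the matrix D_ξ := DᵀD − ξ²I is invertible and there exists ω ∈ ℝ such that det H_ξ(iω) = 0; i.e. every level ξ strictly between the largest singular value of D and an attained value of the largest singular value of G(i·) is attained as a singular value at some frequency, and hence H_ξ has a root on the imaginary axis. -/

import Mathlib

open Matrix Complex

noncomputable section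

variable {n nu ny m : ℕ}

/-- `D_ξ = Dᵀ D − ξ² I`. -/
def Dxi (D : Matrix (Fin ny) (Fin nu) ℝ) (ξ : ℝ) : Matrix (Fin nu) (Fin nu) ℝ :=
  Dᵀ * D - ξ ^ 2 • (1 : Matrix (Fin nu) (Fin nu) ℝ)

/-- `(Dᵀ)_ξ = D Dᵀ − ξ² I`, the matrix denoted `D_ξ^{-T}`-inverse base in the paper
(the only dimensionally consistent reading of the `(2,1)` block of `M₀`).
Note that it is invertible iff `D_ξ` is (for `ξ ≠ 0`), since `DᵀD` and `DDᵀ` have the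
same nonzero eigenvalues. -/
def DxiT (D : Matrix (Fin ny) (Fin nu) ℝ) (ξ : ℝ) : Matrix (Fin ny) (Fin ny) ℝ :=
  D * Dᵀ - ξ ^ 2 • (1 : Matrix (Fin ny) (Fin ny) ℝ)

/-- The block matrix `M₀`. -/
def Mzero (A0 : Matrix (Fin n) (Fin n) ℝ) (B : Matrix (Fin n) (Fin nu) ℝ)
    (C : Matrix (Fin ny) (Fin n) ℝ) (D : Matrix (Fin ny) (Fin nu) ℝ) (ξ : ℝ) :
    Matrix (Fin n ⊕ Fin n) (Fin n ⊕ Fin n) ℝ :=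
  fromBlocks (A0 - B * (Dxi D ξ)⁻¹ * Dᵀ * C) (-(B * (Dxi D ξ)⁻¹ * Bᵀ))
    (ξ ^ 2 • (Cᵀ * (DxiT D ξ)⁻¹ * C)) (-A0ᵀ + Cᵀ * D * (Dxi D ξ)⁻¹ * Bᵀ)

/-- The block matrix `Mᵢ` for `1 ≤ i ≤ m`. -/
def Mpos (Ai : Matrix (Fin n) (Fin n) ℝ) : Matrix (Fin n ⊕ Fin n) (Fin n ⊕ Fin n) ℝ :=
  fromBlocks Ai 0 0 0

/-- The block matrix `M₋ᵢ` for `1 ≤ i ≤ m`. -/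
def Mneg (Ai : Matrix (Fin n) (Fin n) ℝ) : Matrix (Fin n ⊕ Fin n) (Fin n ⊕ Fin n) ℝ :=
  fromBlocks 0 0 0 (-Aiᵀ)

/-- `H_ξ(λ) = λI − M₀ − Σᵢ (Mᵢ e^{−λτᵢ} + M₋ᵢ e^{λτᵢ})`. -/
def Hxi (A0 : Matrix (Fin n) (Fin n) ℝ) (A : Fin m → Matrix (Fin n) (Fin n) ℝ)
    (B : Matrix (Fin n) (Fin nu) ℝ) (C : Matrix (Fin ny) (Fin n) ℝ)
    (D : Matrix (Fin ny) (Fin nu) ℝ) (τ : Fin m → ℝ) (ξ : ℝ) (lam : ℂ) :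
    Matrix (Fin n ⊕ Fin n) (Fin n ⊕ Fin n) ℂ :=
  lam • (1 : Matrix (Fin n ⊕ Fin n) (Fin n ⊕ Fin n) ℂ)
    - (Mzero A0 B C D ξ).map Complex.ofReal
    - ∑ i : Fin m, (Complex.exp (-lam * (τ i : ℂ)) • (Mpos (A i)).map Complex.ofReal
        + Complex.exp (lam * (τ i : ℂ)) • (Mneg (A i)).map Complex.ofReal)

/-- `A(λ) = λI − A₀ − Σᵢ Aᵢ e^{−λτᵢ}`. -/
def Amat (A0 : Matrix (Fin n) (Fin n) ℝ) (A : Fin m → Matrix (Fin n) (Fin n) ℝ)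
    (τ : Fin m → ℝ) (lam : ℂ) : Matrix (Fin n) (Fin n) ℂ :=
  lam • (1 : Matrix (Fin n) (Fin n) ℂ) - A0.map Complex.ofReal
    - ∑ i : Fin m, Complex.exp (-lam * (τ i : ℂ)) • (A i).map Complex.ofReal

/-- The transfer function `G(λ) = C A(λ)⁻¹ B + D`. -/
def Gmat (A0 : Matrix (Fin n) (Fin n) ℝ) (A : Fin m → Matrix (Fin n) (Fin n) ℝ)
    (B : Matrix (Fin n) (Fin nu) ℝ) (C : Matrix (Fin ny) (Fin n) ℝ)
    (D : Matrix (Fin ny) (Fin nu) ℝ) (τ : Fin m → ℝ) (lam : ℂ) :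
    Matrix (Fin ny) (Fin nu) ℂ :=
  C.map Complex.ofReal * (Amat A0 A τ lam)⁻¹ * B.map Complex.ofReal + D.map Complex.ofReal

/-- `τ_max`, the maximum of the delays. -/
def tauMax [NeZero m] (τ : Fin m → ℝ) : ℝ :=
  Finset.univ.sup' Finset.univ_nonempty τ

/-- `λ` is an eigenvalue of the infinite-dimensional operator `L_ξ`: there is a continuously
differentiable, not identically zero function `u : [−τ_max, τ_max] → ℂ^{2n}` with
`u′(t) = λ u(t)` on the interval and `u′(0) = M₀ u(0) + Σᵢ (Mᵢ u(−τᵢ) + M₋ᵢ u(τᵢ))`. -/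
def IsEigLxi [NeZero m] (A0 : Matrix (Fin n) (Fin n) ℝ) (A : Fin m → Matrix (Fin n) (Fin n) ℝ)
    (B : Matrix (Fin n) (Fin nu) ℝ) (C : Matrix (Fin ny) (Fin n) ℝ)
    (D : Matrix (Fin ny) (Fin nu) ℝ) (τ : Fin m → ℝ) (ξ : ℝ) (lam : ℂ) : Prop :=
  ∃ u : ℝ → (Fin n ⊕ Fin n → ℂ),
    (∀ t ∈ Set.Icc (-(tauMax τ)) (tauMax τ),
      HasDerivWithinAt u (lam • u t) (Set.Icc (-(tauMax τ)) (tauMax τ)) t) ∧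
    (∃ t ∈ Set.Icc (-(tauMax τ)) (tauMax τ), u t ≠ 0) ∧
    lam • u 0 = (Mzero A0 B C D ξ).map Complex.ofReal *ᵥ u 0
      + ∑ i : Fin m, ((Mpos (A i)).map Complex.ofReal *ᵥ u (-(τ i))
          + (Mneg (A i)).map Complex.ofReal *ᵥ u (τ i))


/-- The operator norm of a complex matrix, viewed as a linear map between Euclidean spaces
(i.e. its largest singular value). -/
def l2OpNorm {a b : ℕ} (M : Matrix (Fin a) (Fin b) ℂ) : ℝ :=
  ‖LinearMap.toContinuousLinearMap (Matrix.toEuclideanLin M)‖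

/-!
Since `G(iω) → D` as `ω → ∞` and `ω ↦ ‖G(iω)‖` is continuous, the intermediate value theorem
gives a frequency `ω` with `‖G(iω)‖ = ξ`. Then `ξ²` is an eigenvalue of `G(iω)ᴴ G(iω)`; for an
eigenvector `u`, with `v = G(iω) u`, the vector `(A(iω)⁻¹ B u, A(iω)⁻ᴴ Cᴴ v)` is a nonzero kernel
vector of `H_ξ(iω)`. The matrices `DᴴD − ξ²` and `DDᴴ − ξ²` are invertible because
`‖DᴴD‖ = ‖DDᴴ‖ = ‖D‖² < ξ²`.
-/

open Filter Topology
open scoped Matrix.Norms.L2Operator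

namespace Matrix

variable {k p q : Type*} [Fintype k] [Fintype p] [Fintype q] [DecidableEq p]

theorem isUnit_conjTranspose_mul_self_sub_of_norm_lt {M : Matrix q p ℂ} {ξ : ℝ}
    (h : ‖M‖ < ξ) : IsUnit (Mᴴ * M - (ξ : ℂ) ^ 2 • 1) := by
  cases subsingleton_or_nontrivial (Matrix p p ℂ)
  · exact isUnit_of_subsingleton _
  by_contra hM
  have hmem : (ξ : ℂ) ^ 2 ∈ spectrum ℂ (Mᴴ * M) := by
    rwa [spectrum.mem_iff, ← IsUnit.neg_iff, neg_sub, Algebra.algebraMap_eq_smul_one]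
  have := spectrum.norm_le_norm_of_mem hmem
  rw [l2_opNorm_conjTranspose_mul_self, norm_pow, Complex.norm_real, Real.norm_eq_abs,
    sq_abs] at this
  nlinarith [norm_nonneg M]

open scoped MatrixOrder ComplexOrder in
theorem exists_conjTranspose_mul_self_mulVec_eq_norm_sq [Nonempty p] (M : Matrix q p ℂ) :
    ∃ u ≠ 0, (Mᴴ * M) *ᵥ u = (‖M‖ : ℂ) ^ 2 • u := by
  have hmem := CStarAlgebra.norm_mem_spectrum_of_nonneg
    (nonneg_iff_posSemidef.2 (posSemidef_conjTranspose_mul_self M))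
  rw [spectrum.mem_iff, isUnit_iff_isUnit_det, isUnit_iff_ne_zero, not_not,
    ← exists_mulVec_eq_zero_iff] at hmem
  obtain ⟨u, hu, hMu⟩ := hmem
  refine ⟨u, hu, ?_⟩
  rw [l2_opNorm_conjTranspose_mul_self, Algebra.algebraMap_eq_smul_one,
    sub_mulVec, sub_eq_zero, smul_mulVec, one_mulVec] at hMu
  rw [← hMu, sq, ← Complex.ofReal_mul, Complex.coe_smul]

theorem mul_inv_conjTranspose_mul_self_sub [DecidableEq q] (D : Matrix q p ℂ) {c : ℂ}
    (hE : IsUnit (Dᴴ * D - c • 1)) (hF : IsUnit (D * Dᴴ - c • 1)) :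
    D * (Dᴴ * D - c • 1)⁻¹ = (D * Dᴴ - c • 1)⁻¹ * D := by
  have hcomm : (D * Dᴴ - c • 1) * D = D * (Dᴴ * D - c • 1) := by
    simp only [Matrix.sub_mul, Matrix.mul_sub, Matrix.mul_assoc, Matrix.smul_mul,
      Matrix.mul_smul, Matrix.one_mul, Matrix.mul_one]
  calc D * (Dᴴ * D - c • 1)⁻¹
      = (D * Dᴴ - c • 1)⁻¹ * ((D * Dᴴ - c • 1) * D) * (Dᴴ * D - c • 1)⁻¹ := by
        rw [← Matrix.mul_assoc, nonsing_inv_mul _ ((isUnit_iff_isUnit_det _).1 hF),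
          Matrix.one_mul]
    _ = (D * Dᴴ - c • 1)⁻¹ * D := by
        rw [hcomm, Matrix.mul_assoc, Matrix.mul_assoc,
          mul_nonsing_inv _ ((isUnit_iff_isUnit_det _).1 hE), Matrix.mul_one]

theorem det_fromBlocks_eq_zero_of_conjTranspose_mul_self_mulVec_eq [DecidableEq k]
    [DecidableEq q] {A : Matrix k k ℂ} (B : Matrix k p ℂ) (C : Matrix q k ℂ) (D : Matrix q p ℂ)
    {c : ℂ}
    (hA : IsUnit A) (hE : IsUnit (Dᴴ * D - c • 1)) (hF : IsUnit (D * Dᴴ - c • 1))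
    {u : p → ℂ} (hu : u ≠ 0)
    (hGu : ((C * A⁻¹ * B + D)ᴴ * (C * A⁻¹ * B + D)) *ᵥ u = c • u) :
    (fromBlocks (A + B * (Dᴴ * D - c • 1)⁻¹ * Dᴴ * C) (B * (Dᴴ * D - c • 1)⁻¹ * Bᴴ)
      (-(c • (Cᴴ * (D * Dᴴ - c • 1)⁻¹ * C))) (-Aᴴ - Cᴴ * D * (Dᴴ * D - c • 1)⁻¹ * Bᴴ)).det
      = 0 := by
  have hDE := mul_inv_conjTranspose_mul_self_sub D hE hF
  set E := (Dᴴ * D - c • 1)⁻¹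
  set F := (D * Dᴴ - c • 1)⁻¹
  set v := (C * A⁻¹ * B + D) *ᵥ u
  set x := A⁻¹ *ᵥ B *ᵥ u
  set y := Aᴴ⁻¹ *ᵥ Cᴴ *ᵥ v
  have hAx : A *ᵥ x = B *ᵥ u := by
    rw [mulVec_mulVec, mul_nonsing_inv _ ((isUnit_iff_isUnit_det _).1 hA), one_mulVec]
  have hAy : Aᴴ *ᵥ y = Cᴴ *ᵥ v := by
    rw [mulVec_mulVec, mul_nonsing_inv _ ((isUnit_iff_isUnit_det Aᴴ).1 hA.star), one_mulVec]
  have hCx : C *ᵥ x = v - D *ᵥ u := by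
    simp only [v, x, add_mulVec, mulVec_mulVec, Matrix.mul_assoc, add_sub_cancel_right]
  have hBy : Bᴴ *ᵥ y = c • u - Dᴴ *ᵥ v := by
    have hGv : (C * A⁻¹ * B + D)ᴴ *ᵥ v = c • u := by rw [mulVec_mulVec]; exact hGu
    rw [← hGv, conjTranspose_add, add_mulVec, add_sub_cancel_right, conjTranspose_mul,
      conjTranspose_mul, conjTranspose_nonsing_inv, ← mulVec_mulVec, ← mulVec_mulVec]
  have hEu : E *ᵥ (Dᴴ *ᵥ C *ᵥ x + Bᴴ *ᵥ y) = -u := by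
    have : Dᴴ *ᵥ C *ᵥ x + Bᴴ *ᵥ y = -((Dᴴ * D - c • 1) *ᵥ u) := by
      rw [hCx, hBy, sub_mulVec, smul_mulVec, one_mulVec, ← mulVec_mulVec, mulVec_sub]
      abel
    rw [this, mulVec_neg, mulVec_mulVec, nonsing_inv_mul _ ((isUnit_iff_isUnit_det _).1 hE),
      one_mulVec]
  have hFv : F *ᵥ (c • C *ᵥ x + D *ᵥ Bᴴ *ᵥ y) = -v := by
    have : c • C *ᵥ x + D *ᵥ Bᴴ *ᵥ y = -((D * Dᴴ - c • 1) *ᵥ v) := by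
      rw [hCx, hBy, sub_mulVec, smul_mulVec, one_mulVec, ← mulVec_mulVec, mulVec_sub,
        mulVec_smul, smul_sub]
      abel
    rw [this, mulVec_neg, mulVec_mulVec, nonsing_inv_mul _ ((isUnit_iff_isUnit_det _).1 hF),
      one_mulVec]
  refine exists_mulVec_eq_zero_iff.1 ⟨Sum.elim x y, fun hxy ↦ hu ?_, ?_⟩
  · have hx : x = 0 := funext fun i ↦ congrFun hxy (Sum.inl i)
    have hy : y = 0 := funext fun i ↦ congrFun hxy (Sum.inr i)
    rw [hx, hy, mulVec_zero, mulVec_zero, mulVec_zero, add_zero, mulVec_zero] at hEu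
    exact neg_eq_zero.1 hEu.symm
  · rw [fromBlocks_mulVec, Sum.elim_comp_inl, Sum.elim_comp_inr, ← Sum.elim_zero_zero]
    congr 1
    · calc (A + B * E * Dᴴ * C) *ᵥ x + (B * E * Bᴴ) *ᵥ y
          = A *ᵥ x + B *ᵥ E *ᵥ (Dᴴ *ᵥ C *ᵥ x + Bᴴ *ᵥ y) := by
            simp only [add_mulVec, mulVec_add, mulVec_mulVec, Matrix.mul_assoc, add_assoc]
        _ = 0 := by rw [hAx, hEu, mulVec_neg, add_neg_cancel]
    · rw [show Cᴴ * D * E * Bᴴ = Cᴴ * F * D * Bᴴ by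
        rw [Matrix.mul_assoc Cᴴ D E, hDE, ← Matrix.mul_assoc]]
      calc (-(c • (Cᴴ * F * C))) *ᵥ x + (-Aᴴ - Cᴴ * F * D * Bᴴ) *ᵥ y
          = -(Cᴴ *ᵥ F *ᵥ (c • C *ᵥ x + D *ᵥ Bᴴ *ᵥ y) + Aᴴ *ᵥ y) := by
            simp only [neg_mulVec, sub_mulVec, smul_mulVec, mulVec_add, mulVec_smul,
              mulVec_mulVec, Matrix.mul_assoc]
            abel
        _ = 0 := by rw [hFv, hAy, mulVec_neg, neg_add_cancel, neg_zero]

end Matrix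

theorem RingHom.map_nonsing_inv {K L ι : Type*} [Field K] [Field L] [Fintype ι] [DecidableEq ι]
    (f : K →+* L) (M : Matrix ι ι K) : M⁻¹.map f = (M.map f)⁻¹ := by
  have hdet : (M.map f).det = f M.det := (f.map_det M).symm
  have hadj : (M.map f).adjugate = M.adjugate.map f := (f.map_adjugate M).symm
  rw [Matrix.inv_def, Matrix.inv_def, Ring.inverse_eq_inv', Ring.inverse_eq_inv', hdet, hadj]
  ext i j
  simp

theorem l2OpNorm_eq_norm {a b : ℕ} (M : Matrix (Fin a) (Fin b) ℂ) : l2OpNorm M = ‖M‖ := rfl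

section System

variable (A0 : Matrix (Fin n) (Fin n) ℝ) (A : Fin m → Matrix (Fin n) (Fin n) ℝ)
  (B : Matrix (Fin n) (Fin nu) ℝ) (C : Matrix (Fin ny) (Fin n) ℝ)
  (D : Matrix (Fin ny) (Fin nu) ℝ) (τ : Fin m → ℝ)

theorem map_ofReal_Dxi (ξ : ℝ) :
    (Dxi D ξ).map ofReal = (D.map ofReal)ᴴ * D.map ofReal - (ξ : ℂ) ^ 2 • 1 := by
  ext i j
  simp [Dxi, Matrix.mul_apply, Matrix.one_apply, apply_ite ofReal]

theorem map_ofReal_DxiT (ξ : ℝ) :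
    (DxiT D ξ).map ofReal = D.map ofReal * (D.map ofReal)ᴴ - (ξ : ℂ) ^ 2 • 1 := by
  ext i j
  simp [DxiT, Matrix.mul_apply, Matrix.one_apply, apply_ite ofReal]

-- On the imaginary axis `conj λ = -λ`, which turns the lower-right block into `-A(λ)ᴴ - …`.
theorem Hxi_I_mul_eq_fromBlocks (ξ ω : ℝ) :
    Hxi A0 A B C D τ ξ (I * ω) =
      let E := ((D.map ofReal)ᴴ * D.map ofReal - (ξ : ℂ) ^ 2 • 1)⁻¹
      let F := (D.map ofReal * (D.map ofReal)ᴴ - (ξ : ℂ) ^ 2 • 1)⁻¹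
      fromBlocks (Amat A0 A τ (I * ω) + B.map ofReal * E * (D.map ofReal)ᴴ * C.map ofReal)
        (B.map ofReal * E * (B.map ofReal)ᴴ)
        (-((ξ : ℂ) ^ 2 • ((C.map ofReal)ᴴ * F * C.map ofReal)))
        (-(Amat A0 A τ (I * ω))ᴴ - (C.map ofReal)ᴴ * D.map ofReal * E * (B.map ofReal)ᴴ) := by
  rw [← map_ofReal_Dxi, ← map_ofReal_DxiT,
    show ((Dxi D ξ).map ofReal)⁻¹ = (Dxi D ξ)⁻¹.map ofReal from
      (ofRealHom.map_nonsing_inv _).symm,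
    show ((DxiT D ξ).map ofReal)⁻¹ = (DxiT D ξ)⁻¹.map ofReal from
      (ofRealHom.map_nonsing_inv _).symm]
  ext (i | i) (j | j) <;>
    simp [Hxi, Mzero, Mpos, Mneg, Amat, Matrix.mul_apply, Matrix.sum_apply, Matrix.one_apply,
      ← Complex.exp_conj] <;>
    ring

theorem norm_I_mul_smul_one_sub_Amat_le (ω : ℝ) :
    ‖(I * ω) • 1 - Amat A0 A τ (I * ω)‖ ≤ ‖A0.map ofReal‖ + ∑ i, ‖(A i).map ofReal‖ := by
  rw [Amat, sub_sub, sub_sub_cancel]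
  refine (norm_add_le _ _).trans (add_le_add_right ((norm_sum_le _ _).trans
    (Finset.sum_le_sum fun i _ ↦ (norm_smul_le _ _).trans ?_)) _)
  rw [Complex.norm_exp]
  simp

theorem tendsto_inv_I_mul_atTop : Tendsto (fun ω : ℝ ↦ (I * ω)⁻¹) atTop (𝓝 0) := by
  have := (Complex.continuous_ofReal.tendsto 0).comp tendsto_inv_atTop_zero
  simpa [mul_inv, mul_comm] using this.const_mul I⁻¹

theorem tendsto_inv_smul_Amat_atTop :
    Tendsto (fun ω : ℝ ↦ (I * ω)⁻¹ • Amat A0 A τ (I * ω)) atTop (𝓝 1) := by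
  have h := (tendsto_const_nhds (x := (1 : Matrix (Fin n) (Fin n) ℂ))).sub
    (tendsto_inv_I_mul_atTop.zero_smul_isBoundedUnder_le
      (isBoundedUnder_of ⟨_, norm_I_mul_smul_one_sub_Amat_le A0 A τ⟩))
  rw [sub_zero] at h
  refine h.congr' ?_
  filter_upwards [eventually_ne_atTop 0] with ω hω
  have : I * (ω : ℂ) ≠ 0 := mul_ne_zero I_ne_zero (ofReal_ne_zero.2 hω)
  rw [smul_sub, smul_smul, inv_mul_cancel₀ this, one_smul, sub_sub_cancel]

theorem tendsto_Amat_inv_atTop :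
    Tendsto (fun ω : ℝ ↦ (Amat A0 A τ (I * ω))⁻¹) atTop (𝓝 0) := by
  have hN := tendsto_inv_smul_Amat_atTop A0 A τ
  have hNinv : Tendsto (fun ω : ℝ ↦ ((I * ω)⁻¹ • Amat A0 A τ (I * ω))⁻¹) atTop (𝓝 1) := by
    have hinv := continuousAt_matrix_inv (1 : Matrix (Fin n) (Fin n) ℂ) (by simp)
    rw [← inv_one]
    exact hinv.tendsto.comp hN
  have hdet : ∀ᶠ ω : ℝ in atTop, ((I * ω)⁻¹ • Amat A0 A τ (I * ω)).det ≠ 0 :=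
    ((continuous_id.matrix_det.tendsto 1).comp hN).eventually_ne (by simp)
  have := tendsto_inv_I_mul_atTop.smul hNinv
  rw [zero_smul] at this
  refine this.congr' ?_
  filter_upwards [hdet] with ω hω
  refine (inv_eq_right_inv ?_).symm
  rw [mul_smul_comm, ← smul_mul_assoc, mul_nonsing_inv _ (isUnit_iff_ne_zero.2 hω)]

theorem continuous_Gmat_I_mul (hA : ∀ ω : ℝ, IsUnit (Amat A0 A τ (I * ω))) :
    Continuous fun ω : ℝ ↦ Gmat A0 A B C D τ (I * ω) := by
  have hAmat : Continuous fun ω : ℝ ↦ Amat A0 A τ (I * ω) := by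
    unfold Amat
    fun_prop
  have hinv : Continuous fun ω : ℝ ↦ (Amat A0 A τ (I * ω))⁻¹ :=
    continuous_iff_continuousAt.2 fun ω ↦ (continuousAt_matrix_inv _
      (NormedRing.inverse_continuousAt ((isUnit_iff_isUnit_det _).1 (hA ω)).unit)).comp
        (f := fun ω : ℝ ↦ Amat A0 A τ (I * ω)) hAmat.continuousAt
  unfold Gmat
  fun_prop

theorem tendsto_Gmat_I_mul_atTop :
    Tendsto (fun ω : ℝ ↦ Gmat A0 A B C D τ (I * ω)) atTop (𝓝 (D.map ofReal)) := by
  have hcont : Continuous fun M : Matrix (Fin n) (Fin n) ℂ ↦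
      C.map ofReal * M * B.map ofReal + D.map ofReal := by fun_prop
  have := (hcont.tendsto 0).comp (tendsto_Amat_inv_atTop A0 A τ)
  rwa [Matrix.mul_zero, Matrix.zero_mul, zero_add] at this

theorem exists_norm_Gmat_I_mul_eq (hA : ∀ ω : ℝ, IsUnit (Amat A0 A τ (I * ω))) {ξ ωhat : ℝ}
    (hD : ‖D.map ofReal‖ < ξ) (hξ : ξ ≤ ‖Gmat A0 A B C D τ (I * ωhat)‖) :
    ∃ ω : ℝ, ‖Gmat A0 A B C D τ (I * ω)‖ = ξ := by
  obtain ⟨ω₀, hω₀⟩ := (((continuous_norm.tendsto _).comp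
    (tendsto_Gmat_I_mul_atTop A0 A B C D τ)).eventually (gt_mem_nhds hD)).exists
  exact intermediate_value_univ ω₀ ωhat
    (continuous_norm.comp (continuous_Gmat_I_mul A0 A B C D τ hA)) ⟨hω₀.le, hξ⟩

theorem isUnit_Dxi_of_norm_lt {ξ : ℝ} (hD : ‖D.map ofReal‖ < ξ) : IsUnit (Dxi D ξ) := by
  have h := isUnit_conjTranspose_mul_self_sub_of_norm_lt hD
  have hdet : ((Dxi D ξ).map ofReal).det = ((Dxi D ξ).det : ℂ) := (ofRealHom.map_det _).symm
  rwa [← map_ofReal_Dxi, isUnit_iff_isUnit_det, hdet, isUnit_iff_ne_zero, ofReal_ne_zero,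
    ← isUnit_iff_ne_zero, ← isUnit_iff_isUnit_det] at h

theorem det_Hxi_I_mul_eq_zero {ξ ω : ℝ} (hD : ‖D.map ofReal‖ < ξ)
    (hA : IsUnit (Amat A0 A τ (I * ω))) {u : Fin nu → ℂ} (hu : u ≠ 0)
    (hGu : ((Gmat A0 A B C D τ (I * ω))ᴴ * Gmat A0 A B C D τ (I * ω)) *ᵥ u = (ξ : ℂ) ^ 2 • u) :
    (Hxi A0 A B C D τ ξ (I * ω)).det = 0 := by
  have hF := isUnit_conjTranspose_mul_self_sub_of_norm_lt (M := (D.map ofReal)ᴴ)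
    (by rwa [l2_opNorm_conjTranspose])
  rw [conjTranspose_conjTranspose] at hF
  rw [Hxi_I_mul_eq_fromBlocks]
  exact det_fromBlocks_eq_zero_of_conjTranspose_mul_self_mulVec_eq _ _ _ hA
    (isUnit_conjTranspose_mul_self_sub_of_norm_lt hD) hF hu hGu

end System

theorem exists_imaginary_root_of_le_general [NeZero nu]
    (A0 : Matrix (Fin n) (Fin n) ℝ) (A : Fin m → Matrix (Fin n) (Fin n) ℝ)
    (B : Matrix (Fin n) (Fin nu) ℝ) (C : Matrix (Fin ny) (Fin n) ℝ)
    (D : Matrix (Fin ny) (Fin nu) ℝ) (τ : Fin m → ℝ)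
    (hA : ∀ ω : ℝ, IsUnit (Amat A0 A τ (Complex.I * ω)))
    (ωhat : ℝ) (ξhat : ℝ) (hξhat : ξhat = l2OpNorm (Gmat A0 A B C D τ (Complex.I * ωhat))) :
    ∀ ξ : ℝ, l2OpNorm (D.map Complex.ofReal) < ξ → ξ ≤ ξhat →
      IsUnit (Dxi D ξ) ∧ ∃ ω : ℝ, (Hxi A0 A B C D τ ξ (Complex.I * ω)).det = 0 := by
  intro ξ hD hξ
  rw [l2OpNorm_eq_norm] at hD
  rw [hξhat, l2OpNorm_eq_norm] at hξ
  obtain ⟨ω, hω⟩ := exists_norm_Gmat_I_mul_eq A0 A B C D τ hA hD hξ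
  obtain ⟨u, hu, hGu⟩ :=
    exists_conjTranspose_mul_self_mulVec_eq_norm_sq (Gmat A0 A B C D τ (I * ω))
  rw [hω] at hGu
  exact ⟨isUnit_Dxi_of_norm_lt D hD, ω, det_Hxi_I_mul_eq_zero A0 A B C D τ hD (hA ω) hu hGu⟩

/-- for every level `ξ` with `‖D‖ < ξ ≤ ‖G(iω̂)‖`, the matrix `D_ξ` is
invertible and `H_ξ` has a root on the imaginary axis. -/
theorem exists_imaginary_root_of_le [NeZero n] [NeZero nu] [NeZero ny] [NeZero m]
    (A0 : Matrix (Fin n) (Fin n) ℝ) (A : Fin m → Matrix (Fin n) (Fin n) ℝ)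
    (B : Matrix (Fin n) (Fin nu) ℝ) (C : Matrix (Fin ny) (Fin n) ℝ)
    (D : Matrix (Fin ny) (Fin nu) ℝ) (τ : Fin m → ℝ) (hτ : ∀ i, 0 ≤ τ i)
    (hA : ∀ ω : ℝ, IsUnit (Amat A0 A τ (Complex.I * ω)))
    (ωhat : ℝ) (ξhat : ℝ) (hξhat : ξhat = l2OpNorm (Gmat A0 A B C D τ (Complex.I * ωhat))) :
    ∀ ξ : ℝ, l2OpNorm (D.map Complex.ofReal) < ξ → ξ ≤ ξhat →
      IsUnit (Dxi D ξ) ∧ ∃ ω : ℝ, (Hxi A0 A B C D τ ξ (Complex.I * ω)).det = 0 :=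
  exists_imaginary_root_of_le_general A0 A B C D τ hA ωhat ξhat hξhat
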